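/- Let G be a cactus on n vertices with k pendant vertices, n ≥ k ≥ 0, and G not isomorphic to C_3, C_3 with a pendant edge, or C_4. Then PI(G) ≥ (n-1)(n-2) - 2⌊(n-k-1)/2⌋. -/

import Mathlib

open SimpleGraph Finset
open scoped Classical

variable {V : Type*}

/-- Number of vertices strictly closer to `x` than to `y` (excluding `x` and `y`). -/
noncomputable def nclose (G : SimpleGraph V) (x y : V) : ℕ :=
  Nat.card {w : V | w ≠ x ∧ w ≠ y ∧ G.dist w x < G.dist w y}

/-- The contribution `PI(e) = n_{xy}(x) + n_{xy}(y)` of an edge. -/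
noncomputable def PIedge (G : SimpleGraph V) : Sym2 V → ℕ :=
  Sym2.lift ⟨fun x y => nclose G x y + nclose G y x, fun _ _ => add_comm _ _⟩

/-- The vertex PI index of a graph. -/
noncomputable def PI [Fintype V] (G : SimpleGraph V) : ℕ :=
  ∑ e ∈ G.edgeFinset, PIedge G e

/-- A cactus: connected, and any two cycles share at most one vertex. -/
def IsCactus (G : SimpleGraph V) : Prop :=
  G.Connected ∧ ∀ (u v : V) (c₁ : G.Walk u u) (c₂ : G.Walk v v),
    c₁.IsCycle → c₂.IsCycle → {e | e ∈ c₁.edges} ≠ {e | e ∈ c₂.edges} →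
    Set.ncard {x | x ∈ c₁.support ∧ x ∈ c₂.support} ≤ 1
/-- The number of pendant vertices (vertices of degree 1). -/
noncomputable def numPendant [Fintype V] (G : SimpleGraph V) : ℕ :=
  Nat.card {v : V | G.degree v = 1}

/-- The triangle with one pendant edge: vertices `0,1,2,3`, edges `01, 12, 20, 23`. -/
def pawGraph : SimpleGraph (Fin 4) :=
  SimpleGraph.fromEdgeSet {s(0, 1), s(1, 2), s(2, 0), s(2, 3)}

/-!
For an edge `xy`, the vertices other than `x, y` not counted by `PI(xy)` are exactly those
equidistant from `x` and `y`. Fix a vertex `w` of a connected graph: sending every other vertex to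
an edge along a shortest path towards `w` shows that at most `m - n + 1` edges are equidistant
from `w`. Double counting gives `PI(G) ≥ m(n-2) - n(m-n+1) = (n-1)(n-2) - 2c`, where
`c = m - n + 1`.
In a cactus the fundamental cycles of a spanning tree are pairwise edge-disjoint, have at least
three edges each and contain no pendant edge; when `c ≥ 1`, `G` is not a single edge, so
distinct pendant vertices have distinct edges. Hence `3c + k ≤ m`, i.e. `2c ≤ n - k - 1`.
-/

namespace SimpleGraph

variable {G : SimpleGraph V}

lemma Connected.exists_adj_dist_add_one_eq (hG : G.Connected) {w v : V} (hvw : v ≠ w) :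
    ∃ u, G.Adj v u ∧ G.dist w u + 1 = G.dist w v := by
  obtain ⟨p, hp⟩ := (hG v w).exists_walk_length_eq_dist
  obtain ⟨u, hvu, q, rfl⟩ := Walk.exists_eq_cons_of_ne hvw p
  refine ⟨u, hvu, le_antisymm ?_ ?_⟩
  · calc G.dist w u + 1 ≤ q.length + 1 := by
          rw [dist_comm]; exact Nat.add_le_add_right (dist_le q) 1
      _ = G.dist w v := by rw [dist_comm, ← hp, Walk.length_cons]
  · calc G.dist w v ≤ G.dist w u + G.dist u v := hG.dist_triangle
      _ = G.dist w u + 1 := by rw [dist_eq_one_iff_adj.mpr hvu.symm]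

def IsEquidistant (G : SimpleGraph V) (w : V) : Sym2 V → Prop :=
  Sym2.lift ⟨fun x y => G.dist w x = G.dist w y, fun _ _ => propext eq_comm⟩

@[simp]
lemma isEquidistant_mk {w x y : V} : G.IsEquidistant w s(x, y) ↔ G.dist w x = G.dist w y :=
  Iff.rfl

/-- The cycle rank `m - n + 1` (for connected graphs `m ≥ n - 1`, so the subtraction is exact). -/
noncomputable def cycleRank [Fintype V] (G : SimpleGraph V) : ℕ :=
  #G.edgeFinset - (Fintype.card V - 1)

lemma Connected.card_edgeFinset_eq_add_cycleRank [Fintype V] (hG : G.Connected) :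
    #G.edgeFinset = Fintype.card V - 1 + G.cycleRank := by
  have := hG.card_vert_le_card_edgeSet_add_one
  rw [Nat.card_eq_fintype_card, Nat.card_eq_fintype_card, ← edgeFinset_card] at this
  rw [cycleRank]
  omega

/-- Sending each `v ≠ w` to an edge from `v` towards `w` injects `V \ {w}` into the edges whose
endpoints are at different distances from `w`. -/
lemma Connected.card_filter_isEquidistant_add_le [Fintype V] (hG : G.Connected) (w : V) :
    #{e ∈ G.edgeFinset | G.IsEquidistant w e} + (Fintype.card V - 1) ≤ #G.edgeFinset := by
  choose parent hadj hdist using fun v (hv : v ≠ w) => hG.exists_adj_dist_add_one_eq hv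
  have hinj : #((univ : Finset V).erase w) ≤ #{e ∈ G.edgeFinset | ¬G.IsEquidistant w e} := by
    refine card_le_card_of_injOn (fun v => if hv : v = w then s(v, v) else s(v, parent v hv))
      (fun v hv => ?_) (fun a ha b hb hab => ?_)
    · have hvw := ne_of_mem_erase hv
      simp only [dif_neg hvw, coe_filter, Set.mem_ofPred_eq, mem_edgeFinset, mem_edgeSet,
        isEquidistant_mk]
      exact ⟨hadj v hvw, by have := hdist v hvw; omega⟩
    · have haw := ne_of_mem_erase ha
      have hbw := ne_of_mem_erase hb
      simp only [dif_neg haw, dif_neg hbw, Sym2.eq_iff] at hab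
      rcases hab with ⟨h, -⟩ | ⟨hab, hba⟩
      · exact h
      · have ha' := hdist a haw
        have hb' := hdist b hbw
        rw [hba] at ha'
        rw [← hab] at hb'
        omega
  rw [card_erase_of_mem (mem_univ w), card_univ] at hinj
  have := card_filter_add_card_filter_not (s := G.edgeFinset) (fun e => G.IsEquidistant w e)
  omega

lemma Walk.IsCycle.two_le_degree [Fintype V] {u v : V} {c : G.Walk u u} (hc : c.IsCycle)
    (hv : v ∈ c.support) : 2 ≤ G.degree v :=
  calc 2 = (c.toSubgraph.neighborSet v).ncard := (hc.ncard_neighborSet_toSubgraph_eq_two hv).symm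
    _ ≤ (G.neighborSet v).ncard :=
      Set.ncard_le_ncard (c.toSubgraph.neighborSet_subset v) (Set.toFinite _)
    _ = G.degree v := by
      rw [← card_neighborSet_eq_degree, Set.ncard_eq_toFinset_card', Set.toFinset_card]

lemma Connected.eq_or_eq_of_adj_of_degree_eq_one [Fintype V] (hG : G.Connected) {a b : V}
    (hab : G.Adj a b) (ha : G.degree a = 1) (hb : G.degree b = 1) (v : V) : v = a ∨ v = b := by
  have hclosed : ∀ {u u'}, G.Adj u u' → (u = a ∨ u = b) → u' = a ∨ u' = b := by
    rintro u u' huu' (rfl | rfl)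
    · exact .inr (card_le_one.mp ha.le _ (mem_neighborFinset _ _ _ |>.mpr huu') _
        (mem_neighborFinset _ _ _ |>.mpr hab))
    · exact .inl (card_le_one.mp hb.le _ (mem_neighborFinset _ _ _ |>.mpr huu') _
        (mem_neighborFinset _ _ _ |>.mpr hab.symm))
  suffices ∀ {u w : V} (p : G.Walk u w), (u = a ∨ u = b) → w = a ∨ w = b from
    this (hG a v).some (.inl rfl)
  intro u w p
  induction p with
  | nil => exact id
  | cons h _ ih => exact fun hu => ih (hclosed h hu)

lemma exists_isCycle_edges_subset_of_notMem_edgeSet {T : SimpleGraph V} (hTG : T ≤ G)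
    (hT : T.Connected) {e : Sym2 V} (he : e ∈ G.edgeSet) (heT : e ∉ T.edgeSet) :
    ∃ (u : V) (c : G.Walk u u), c.IsCycle ∧ e ∈ c.edges ∧
      ∀ e' ∈ c.edges, e' = e ∨ e' ∈ T.edgeSet := by
  induction e using Sym2.ind with
  | _ x y =>
    have hxy : G.Adj x y := he
    let q : G.Walk y x := (hT y x).some.bypass.mapLe hTG
    have hq : ∀ e' ∈ q.edges, e' ∈ T.edgeSet := fun e' h' =>
      Walk.edges_subset_edgeSet _ (by rwa [Walk.edges_mapLe_eq_edges] at h')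
    refine ⟨x, .cons hxy q, ?_, by simp, ?_⟩
    · exact (Walk.cons_isCycle_iff q hxy).mpr
        ⟨(Walk.isPath_mapLe hTG).mpr (Walk.bypass_isPath _), fun h => heT (hq _ h)⟩
    · intro e' he'
      rw [Walk.edges_cons, List.mem_cons] at he'
      exact he'.imp id (hq e')

lemma Connected.numPendant_le_card_filter_edgeFinset [Fintype V] (hG : G.Connected)
    (hdeg : ∃ v, 2 ≤ G.degree v) :
    numPendant G ≤ #{e ∈ G.edgeFinset | ∃ v ∈ e, G.degree v = 1} := by
  set P : Finset V := {v | G.degree v = 1}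
  have hdisj : (P : Set V).PairwiseDisjoint fun v => G.incidenceFinset v := by
    intro a ha b hb hab
    simp only [coe_filter, Set.mem_ofPred_eq, mem_univ, true_and, P] at ha hb
    refine show Disjoint (G.incidenceFinset a) (G.incidenceFinset b) from
      Finset.disjoint_left.mpr fun e hea heb => ?_
    have hadj := G.adj_of_mem_incidenceSet hab ((mem_incidenceFinset _ _ _).mp hea)
      ((mem_incidenceFinset _ _ _).mp heb)
    obtain ⟨v, hv⟩ := hdeg
    rcases hG.eq_or_eq_of_adj_of_degree_eq_one hadj ha hb v with rfl | rfl <;> omega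
  calc numPendant G = ∑ v ∈ P, #(G.incidenceFinset v) := by
        rw [numPendant, Nat.card_coe_set_eq, Set.ncard_eq_toFinset_card', Set.toFinset_ofPred,
          card_eq_sum_ones]
        exact sum_congr rfl fun v hv => by
          rw [card_incidenceFinset_eq_degree, (mem_filter.mp hv).2]
    _ = #(P.biUnion fun v => G.incidenceFinset v) := (card_biUnion hdisj).symm
    _ ≤ _ := by
      refine card_le_card (biUnion_subset.mpr fun v hv e he => mem_filter.mpr ?_)
      rw [mem_incidenceFinset, incidenceSet, Set.mem_sep_iff] at he
      exact ⟨mem_edgeFinset.mpr he.1, v, he.2, (mem_filter.mp hv).2⟩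

end SimpleGraph

lemma IsCactus.edges_disjoint {G : SimpleGraph V} (hG : IsCactus G) {u v : V}
    {c₁ : G.Walk u u} {c₂ : G.Walk v v} (h₁ : c₁.IsCycle) (h₂ : c₂.IsCycle)
    (hne : {e | e ∈ c₁.edges} ≠ {e | e ∈ c₂.edges}) : c₁.edges.Disjoint c₂.edges := by
  intro e he₁ he₂
  induction e using Sym2.ind with
  | _ a b =>
    have hsub : ({a, b} : Set V) ⊆ {x | x ∈ c₁.support ∧ x ∈ c₂.support} := by
      rintro z (rfl | rfl)
      · exact ⟨c₁.fst_mem_support_of_mem_edges he₁,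
          c₂.fst_mem_support_of_mem_edges he₂⟩
      · exact ⟨c₁.snd_mem_support_of_mem_edges he₁,
          c₂.snd_mem_support_of_mem_edges he₂⟩
    have hfin : {x | x ∈ c₁.support ∧ x ∈ c₂.support}.Finite :=
      (List.finite_toSet c₁.support).subset fun _ hx => hx.1
    have := Set.ncard_le_ncard hsub hfin
    rw [Set.ncard_pair (G.ne_of_adj (c₁.edges_subset_edgeSet he₁))] at this
    have := hG.2 u v c₁ c₂ h₁ h₂ hne
    omega

section

variable [Fintype V] {G : SimpleGraph V}

lemma nclose_eq_card (x y : V) :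
    nclose G x y = #{w | w ≠ x ∧ w ≠ y ∧ G.dist w x < G.dist w y} := by
  rw [nclose, Nat.card_coe_set_eq, Set.ncard_eq_toFinset_card', Set.toFinset_ofPred]

/-- Every vertex other than `x, y` is closer to `x`, closer to `y`, or equidistant; `x` and `y`
themselves are not equidistant. -/
lemma PIedge_add_card_filter_isEquidistant {x y : V} (hxy : G.Adj x y) :
    PIedge G s(x, y) + #{w | G.IsEquidistant w s(x, y)} = Fintype.card V - 2 := by
  have hx : G.dist x y = 1 := dist_eq_one_iff_adj.mpr hxy
  have hy : G.dist y x = 1 := dist_eq_one_iff_adj.mpr hxy.symm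
  have hpoint : ∀ w : V,
      (if w ≠ x ∧ w ≠ y ∧ G.dist w x < G.dist w y then 1 else 0) +
      (if w ≠ y ∧ w ≠ x ∧ G.dist w y < G.dist w x then 1 else 0) +
      (if G.dist w x = G.dist w y then 1 else 0) = if w ≠ x ∧ w ≠ y then 1 else 0 := by
    intro w
    by_cases hwx : w = x
    · subst hwx; simp [hx]
    by_cases hwy : w = y
    · subst hwy; simp [hy]
    simp only [ne_eq, hwx, hwy, not_false_eq_true, true_and]
    split_ifs <;> omega
  have hpair : #{w | w ≠ x ∧ w ≠ y} = Fintype.card V - 2 := by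
    rw [show ({w | w ≠ x ∧ w ≠ y} : Finset V) = (univ.erase x).erase y by
        ext; simp [and_comm],
      card_erase_of_mem (by simp [hxy.ne.symm]), card_erase_of_mem (mem_univ x), card_univ]
    omega
  rw [PIedge, Sym2.lift_mk]
  simp only [nclose_eq_card, isEquidistant_mk, card_filter]
  rw [← hpair, card_filter, ← sum_add_distrib, ← sum_add_distrib]
  exact sum_congr rfl fun w _ => hpoint w

lemma PI_add_sum_card_filter_isEquidistant :
    PI G + ∑ w, #{e ∈ G.edgeFinset | G.IsEquidistant w e} =
      #G.edgeFinset * (Fintype.card V - 2) := by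
  have hswap : ∑ w, #{e ∈ G.edgeFinset | G.IsEquidistant w e} =
      ∑ e ∈ G.edgeFinset, #{w | G.IsEquidistant w e} := by
    simp only [card_filter]
    exact sum_comm
  rw [hswap, PI, ← sum_add_distrib, ← smul_eq_mul, ← sum_const]
  refine sum_congr rfl fun e he => ?_
  induction e using Sym2.ind with
  | _ x y => exact PIedge_add_card_filter_isEquidistant (mem_edgeFinset.mp he)

lemma SimpleGraph.Connected.sub_one_mul_sub_two_le_PI_add (hG : G.Connected) :
    (Fintype.card V - 1) * (Fintype.card V - 2) ≤ PI G + 2 * G.cycleRank := by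
  have hbound := sum_le_sum fun w (_ : w ∈ univ) => Nat.le_sub_of_add_le
    (hG.card_filter_isEquidistant_add_le w)
  rw [sum_const, card_univ, smul_eq_mul, ← cycleRank] at hbound
  have hPI := PI_add_sum_card_filter_isEquidistant (G := G)
  rw [hG.card_edgeFinset_eq_add_cycleRank] at hPI
  rcases Nat.lt_or_ge (Fintype.card V) 2 with hn | hn
  · simp [show Fintype.card V - 1 = 0 by omega]
  · zify [hn, (by omega : 1 ≤ Fintype.card V)] at hPI hbound ⊢
    linarith

/-- `U` is the union of the fundamental cycles of a spanning tree, which in a cactus are pairwise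
edge-disjoint. -/
lemma IsCactus.exists_cycle_edges (hG : IsCactus G) :
    ∃ U ⊆ G.edgeFinset, 3 * G.cycleRank ≤ #U ∧
      ∀ e ∈ U, ∀ v ∈ e, 2 ≤ G.degree v := by
  obtain ⟨T, hTG, hT⟩ := hG.1.exists_isTree_le
  have hTsub : T.edgeFinset ⊆ G.edgeFinset := edgeFinset_mono hTG
  set D := G.edgeFinset \ T.edgeFinset
  have hD : #D = G.cycleRank := by
    rw [card_sdiff_of_subset hTsub, cycleRank, ← hT.card_edgeFinset]
    omega
  have hfund : ∀ f ∈ D, ∃ (u : V) (c : G.Walk u u), c.IsCycle ∧ f ∈ c.edges ∧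
      ∀ e' ∈ c.edges, e' = f ∨ e' ∈ T.edgeSet := fun f hf => by
    rw [mem_sdiff, mem_edgeFinset, mem_edgeFinset] at hf
    exact exists_isCycle_edges_subset_of_notMem_edgeSet hTG hT.connected hf.1 hf.2
  choose u c hcyc hmem hsub using hfund
  have hdisj : (D.attach : Set D).PairwiseDisjoint fun f => (c f.1 f.2).edges.toFinset := by
    intro f _ g _ hfg
    refine List.disjoint_toFinset_iff_disjoint.mpr
      (hG.edges_disjoint (hcyc f.1 f.2) (hcyc g.1 g.2) fun heq => ?_)
    have hfg' : f.1 ∈ (c g.1 g.2).edges := (Set.ext_iff.mp heq f).mp (hmem f.1 f.2)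
    rcases hsub g.1 g.2 f hfg' with h | h
    · exact hfg (Subtype.ext h)
    · exact (mem_sdiff.mp f.2).2 (mem_edgeFinset.mpr h)
  refine ⟨D.attach.biUnion fun f => (c f.1 f.2).edges.toFinset, ?_, ?_, ?_⟩
  · exact biUnion_subset.mpr fun f _ e he =>
      mem_edgeFinset.mpr ((c f.1 f.2).edges_subset_edgeSet (List.mem_toFinset.mp he))
  · rw [card_biUnion hdisj, ← hD, ← card_attach, mul_comm, ← smul_eq_mul, ← sum_const]
    refine sum_le_sum fun f _ => ?_
    rw [List.toFinset_card_of_nodup (hcyc f.1 f.2).edges_nodup, Walk.length_edges]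
    exact (hcyc f.1 f.2).three_le_length
  · intro e he v hv
    obtain ⟨f, -, hef⟩ := mem_biUnion.mp he
    exact (hcyc f.1 f.2).two_le_degree
      (Walk.mem_support_of_mem_edges (List.mem_toFinset.mp hef) hv)

lemma IsCactus.two_mul_cycleRank_le (hG : IsCactus G) :
    2 * G.cycleRank ≤ Fintype.card V - numPendant G - 1 := by
  obtain ⟨U, hUG, hU, hUdeg⟩ := hG.exists_cycle_edges
  have hm := hG.1.card_edgeFinset_eq_add_cycleRank
  obtain hU0 | ⟨e, he⟩ := (#U).eq_zero_or_pos.imp id card_pos.mp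
  · omega
  have hP := hG.1.numPendant_le_card_filter_edgeFinset
    ⟨e.out.1, hUdeg e he _ (Sym2.out_fst_mem e)⟩
  have hdisj : Disjoint U {e ∈ G.edgeFinset | ∃ v ∈ e, G.degree v = 1} :=
    Finset.disjoint_left.mpr fun e heU heP => by
      obtain ⟨v, hv, h1⟩ := (mem_filter.mp heP).2
      have := hUdeg e heU v hv
      omega
  have hunion : #(U ∪ {e ∈ G.edgeFinset | ∃ v ∈ e, G.degree v = 1}) ≤ #G.edgeFinset :=
    card_le_card (union_subset hUG (filter_subset _ _))
  rw [card_union_of_disjoint hdisj] at hunion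
  omega

end

theorem stmt_14_general [Fintype V] (G : SimpleGraph V) (hG : IsCactus G) :
    (Fintype.card V - 1) * (Fintype.card V - 2) -
      2 * ((Fintype.card V - numPendant G - 1) / 2) ≤ PI G := by
  have hPI := hG.1.sub_one_mul_sub_two_le_PI_add
  have hcactus := hG.two_mul_cycleRank_le
  omega

theorem stmt_14 [Fintype V] (G : SimpleGraph V) (hG : IsCactus G)
    (h3 : ¬Nonempty (G ≃g cycleGraph 3)) (hpaw : ¬Nonempty (G ≃g pawGraph))
    (h4 : ¬Nonempty (G ≃g cycleGraph 4)) :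
    (Fintype.card V - 1) * (Fintype.card V - 2) -
      2 * ((Fintype.card V - numPendant G - 1) / 2) ≤ PI G :=
  stmt_14_general G hG
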